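/- Let X be a random d×d real symmetric matrix with square-integrable entries, mean E[X], and variance Var(X) = E[(X − E[X])²]. Let U be a trace super-uniform random d×d positive semidefinite matrix independent of X, and let A be a d×d symmetric positive definite matrix. Then P( abs(X − E[X]) ⋠ (A U A)^{1/2} ) ≤ tr( Var(X) · A⁻² ). -/

import Mathlib

open MeasureTheory ProbabilityTheory Matrix Filter

noncomputable section

/-- Measurable space structure on matrices (entrywise). -/
instance matMS (d : ℕ) : MeasurableSpace (Matrix (Fin d) (Fin d) ℝ) :=
  inferInstanceAs (MeasurableSpace (Fin d → Fin d → ℝ))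

/-- Loewner order: `A ⪯ B` iff `B - A` is positive semidefinite. -/
def LoewnerLE {d : ℕ} (A B : Matrix (Fin d) (Fin d) ℝ) : Prop := (B - A).PosSemidef

/-- Entrywise expectation of a random matrix. -/
def matExpect {Ω : Type*} {_ : MeasurableSpace Ω} {d : ℕ} (μ : Measure Ω)
    (X : Ω → Matrix (Fin d) (Fin d) ℝ) : Matrix (Fin d) (Fin d) ℝ :=
  Matrix.of fun i j => ∫ ω, X ω i j ∂μ

/-- Entrywise conditional expectation of a random matrix. -/
def matCondExp {Ω : Type*} {m0 : MeasurableSpace Ω} {d : ℕ} (μ : Measure Ω)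
    (m : MeasurableSpace Ω) (X : Ω → Matrix (Fin d) (Fin d) ℝ) : Ω → Matrix (Fin d) (Fin d) ℝ :=
  fun ω => Matrix.of fun i j => (μ[fun ω' => X ω' i j | m]) ω

/-- Spectral functional calculus for real symmetric matrices: apply `f` to the eigenvalues. -/
def matCFC {d : ℕ} (f : ℝ → ℝ) (X : Matrix (Fin d) (Fin d) ℝ) : Matrix (Fin d) (Fin d) ℝ :=
  if hX : X.IsHermitian then
    (hX.eigenvectorUnitary : Matrix (Fin d) (Fin d) ℝ) *
      Matrix.diagonal (fun i => f (hX.eigenvalues i)) *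
      star (hX.eigenvectorUnitary : Matrix (Fin d) (Fin d) ℝ)
  else 0

/-- Positive semidefinite square root (via the spectral calculus). -/
def matSqrt {d : ℕ} (X : Matrix (Fin d) (Fin d) ℝ) : Matrix (Fin d) (Fin d) ℝ :=
  matCFC Real.sqrt X

/-- Matrix absolute value of a symmetric matrix. -/
def matAbs {d : ℕ} (X : Matrix (Fin d) (Fin d) ℝ) : Matrix (Fin d) (Fin d) ℝ :=
  matCFC (fun x => |x|) X

/-- Real power of a symmetric (positive (semi)definite) matrix. -/
def matRPow {d : ℕ} (p : ℝ) (X : Matrix (Fin d) (Fin d) ℝ) : Matrix (Fin d) (Fin d) ℝ :=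
  matCFC (fun x => x ^ p) X

/-- Matrix logarithm of a positive definite matrix. -/
def matLog {d : ℕ} (X : Matrix (Fin d) (Fin d) ℝ) : Matrix (Fin d) (Fin d) ℝ :=
  matCFC Real.log X

/-- Matrix exponential. -/
def matExpMat {d : ℕ} (X : Matrix (Fin d) (Fin d) ℝ) : Matrix (Fin d) (Fin d) ℝ :=
  NormedSpace.exp X

/-- Largest eigenvalue of a symmetric matrix. -/
def lamMax {d : ℕ} (X : Matrix (Fin d) (Fin d) ℝ) : ℝ :=
  if hX : X.IsHermitian then ⨆ i, hX.eigenvalues i else 0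

/-- Operator (spectral) norm: the largest absolute value of an eigenvalue. -/
def specNorm {d : ℕ} (X : Matrix (Fin d) (Fin d) ℝ) : ℝ :=
  if hX : X.IsHermitian then ⨆ i, |hX.eigenvalues i| else 0

/-- A random positive semidefinite matrix `U` is trace super-uniform if
`P(U ⋡ Y) ≤ tr Y` for every positive semidefinite `Y`. -/
def TraceSuperUniform {Ω : Type*} {_ : MeasurableSpace Ω} {d : ℕ} (μ : Measure Ω)
    (U : Ω → Matrix (Fin d) (Fin d) ℝ) : Prop :=
  ∀ Y : Matrix (Fin d) (Fin d) ℝ, Y.PosSemidef →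
    μ {ω | ¬ LoewnerLE Y (U ω)} ≤ ENNReal.ofReal Y.trace

/-- Matrix supermartingale: adapted, symmetric, entrywise integrable, and
`E(Y (n+1) | ℱ n) ⪯ Y n` a.s. for every `n`. -/
def IsMatrixSupermartingale {Ω : Type*} {m0 : MeasurableSpace Ω} {d : ℕ}
    (ℱ : Filtration ℕ m0) (μ : Measure Ω) (Y : ℕ → Ω → Matrix (Fin d) (Fin d) ℝ) : Prop :=
  (∀ n ω, (Y n ω).IsHermitian) ∧
  (∀ n i j, StronglyMeasurable[ℱ n] fun ω => Y n ω i j) ∧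
  (∀ n i j, Integrable (fun ω => Y n ω i j) μ) ∧
  (∀ n, ∀ᵐ ω ∂μ, LoewnerLE (matCondExp μ (ℱ n) (Y (n + 1)) ω) (Y n ω))

/-- Matrix submartingale: adapted, symmetric, entrywise integrable, and
`E(Y (n+1) | ℱ n) ⪰ Y n` a.s. for every `n`. -/
def IsMatrixSubmartingale {Ω : Type*} {m0 : MeasurableSpace Ω} {d : ℕ}
    (ℱ : Filtration ℕ m0) (μ : Measure Ω) (Y : ℕ → Ω → Matrix (Fin d) (Fin d) ℝ) : Prop :=
  (∀ n ω, (Y n ω).IsHermitian) ∧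
  (∀ n i j, StronglyMeasurable[ℱ n] fun ω => Y n ω i j) ∧
  (∀ n i j, Integrable (fun ω => Y n ω i j) μ) ∧
  (∀ n, ∀ᵐ ω ∂μ, LoewnerLE (Y n ω) (matCondExp μ (ℱ n) (Y (n + 1)) ω))

/-- Exchangeability of a sequence of random matrices: any finitely supported permutation
of the indices leaves the joint law invariant. -/
def MatExchangeable {Ω : Type*} {_ : MeasurableSpace Ω} {d : ℕ} (μ : Measure Ω)
    (X : ℕ → Ω → Matrix (Fin d) (Fin d) ℝ) : Prop :=
  ∀ σ : Equiv.Perm ℕ, {n | σ n ≠ n}.Finite →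
    Measure.map (fun ω n => X (σ n) ω) μ = Measure.map (fun ω n => X n ω) μ

/-!
Conjugating by `A` and using that the square root is operator monotone, the event
`abs(X - M) ⋠ (A U A)^{1/2}` is contained in `W ⋠ U` for the positive semidefinite matrix
`W = A⁻¹ (X - M)² A⁻¹`, whose expected trace is `tr(Var(X) A⁻²)`. Conditionally on `W`, trace
super-uniformity bounds `P(W ⋠ U)` by `tr W`. Since `U` is not assumed measurable there is no joint
law to disintegrate, so the conditioning is done by hand: `W` is rounded up in the Loewner order to
a point of a countable grid of mesh `δ` (costing `d² δ` in trace), and on each grid cell the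
independence of `W` and `U` factorises the probability.
-/

open scoped MatrixOrder

section FunctionalCalculus

variable {d : ℕ} {X : Matrix (Fin d) (Fin d) ℝ}

lemma matCFC_eq_cfc (f : ℝ → ℝ) (hX : X.IsHermitian) : matCFC f X = cfc f X := by
  rw [hX.cfc_eq, matCFC, dif_pos hX, IsHermitian.cfc, Unitary.conjStarAlgAut_apply]
  simp [Function.comp_def]

lemma matAbs_nonneg (hX : X.IsHermitian) : 0 ≤ matAbs X := by
  rw [matAbs, matCFC_eq_cfc _ hX]
  exact cfc_nonneg fun x _ => abs_nonneg x

lemma matAbs_mul_self (hX : X.IsHermitian) : matAbs X * matAbs X = X * X := by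
  rw [matAbs, matCFC_eq_cfc _ hX, ← cfc_mul _ _ X]
  simp only [abs_mul_abs_self]
  rw [cfc_mul _ _ X, cfc_id' ℝ X]

lemma matSqrt_nonneg (hX : 0 ≤ X) : 0 ≤ matSqrt X := by
  rw [matSqrt, matCFC_eq_cfc _ (nonneg_iff_posSemidef.mp hX).isHermitian]
  exact cfc_nonneg fun x _ => Real.sqrt_nonneg x

lemma matSqrt_mul_self (hX : 0 ≤ X) : matSqrt X * matSqrt X = X := by
  rw [matSqrt, matCFC_eq_cfc _ (nonneg_iff_posSemidef.mp hX).isHermitian, ← cfc_mul _ _ X]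
  conv_rhs => rw [← cfc_id' ℝ X]
  exact cfc_congr fun x hx => Real.mul_self_sqrt (spectrum_nonneg_of_nonneg hX hx)

end FunctionalCalculus

namespace Matrix

variable {n : Type*} [Fintype n]

lemma le_of_mul_self_le_mul_self [DecidableEq n] {B C : Matrix n n ℝ} (hB : 0 ≤ B) (hC : 0 ≤ C)
    (h : B * B ≤ C * C) : B ≤ C := by
  rw [nonneg_iff_posSemidef] at hB hC
  have hD : (C - B).IsHermitian := hC.isHermitian.sub hB.isHermitian
  rw [le_iff, hD.posSemidef_iff_eigenvalues_nonneg]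
  intro i
  -- On an eigenvector `v` of `C - B` with eigenvalue `λ < 0`,
  -- `v ⬝ (C² - B²) v = λ (v ⬝ C v + v ⬝ B v)`, and `v ⬝ B v > v ⬝ C v ≥ 0` makes this negative.
  by_contra! hneg
  change hD.eigenvalues i < 0 at hneg
  set lam := hD.eigenvalues i
  set v : n → ℝ := (hD.eigenvectorBasis i).ofLp
  have hDv : (C - B) *ᵥ v = lam • v := hD.mulVec_eigenvectorBasis i
  have hvD : v ᵥ* (C - B) = lam • v := by
    rw [← hD.eq, conjTranspose_eq_transpose_of_trivial, vecMul_transpose, hDv]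
  have hv : v ⬝ᵥ v = 1 := by
    have := real_inner_self_eq_norm_sq (hD.eigenvectorBasis i)
    rw [hD.eigenvectorBasis.orthonormal.1 i, EuclideanSpace.inner_eq_star_dotProduct] at this
    simpa [v] using this
  have hb : 0 ≤ v ⬝ᵥ (B *ᵥ v) := by simpa using hB.dotProduct_mulVec_nonneg v
  have hc : 0 ≤ v ⬝ᵥ (C *ᵥ v) := by simpa using hC.dotProduct_mulVec_nonneg v
  have hdiff : v ⬝ᵥ (C *ᵥ v) - v ⬝ᵥ (B *ᵥ v) = lam := by
    rw [← dotProduct_sub, ← sub_mulVec, hDv, dotProduct_smul, smul_eq_mul, hv, mul_one]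
  have hsq : v ⬝ᵥ ((C * C - B * B) *ᵥ v) = lam * (v ⬝ᵥ (C *ᵥ v) + v ⬝ᵥ (B *ᵥ v)) := by
    rw [show C * C - B * B = C * (C - B) + (C - B) * B by noncomm_ring, add_mulVec,
      ← mulVec_mulVec, ← mulVec_mulVec, hDv, dotProduct_add, dotProduct_mulVec v (C - B), hvD,
      mulVec_smul, dotProduct_smul, smul_dotProduct, smul_eq_mul, smul_eq_mul]
    ring
  have hsq_nonneg : 0 ≤ v ⬝ᵥ ((C * C - B * B) *ᵥ v) := by
    simpa using h.dotProduct_mulVec_nonneg v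
  nlinarith

lemma le_add_smul_one_of_abs_sub_le [DecidableEq n] {x y : Matrix n n ℝ} (hx : x.IsHermitian)
    (hy : y.IsHermitian) {c : ℝ} (h : ∀ i j, |y i j - x i j| ≤ c) :
    x ≤ y + (Fintype.card n * c) • 1 := by
  rw [le_iff, show y + (Fintype.card n * c) • 1 - x = (y - x) + (Fintype.card n * c) • 1 by abel]
  refine .of_dotProduct_mulVec_nonneg ((hy.sub hx).add (isHermitian_one.smul (.all _)))
    fun v => ?_
  rcases isEmpty_or_nonempty n with hn | ⟨⟨i₀⟩⟩
  · simp [dotProduct]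
  have hc : 0 ≤ c := (abs_nonneg _).trans (h i₀ i₀)
  have hquad : v ⬝ᵥ ((y - x) *ᵥ v) = ∑ i, ∑ j, v i * (y i j - x i j) * v j := by
    simp [dotProduct, mulVec, Finset.mul_sum, mul_assoc]
  have hterm : ∀ i j, -(c * (|v i| * |v j|)) ≤ v i * (y i j - x i j) * v j := fun i j => by
    refine le_trans ?_ (neg_abs_le _)
    rw [neg_le_neg_iff, abs_mul, abs_mul, mul_comm c, mul_right_comm]
    exact mul_le_mul_of_nonneg_left (h i j) (by positivity)
  have hsum : -(c * (∑ i, |v i|) ^ 2) ≤ ∑ i, ∑ j, v i * (y i j - x i j) * v j := by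
    have hexp : -(c * (∑ i, |v i|) ^ 2) = ∑ i, ∑ j, -(c * (|v i| * |v j|)) := by
      simp only [Finset.sum_neg_distrib, ← Finset.mul_sum, ← Finset.sum_mul, sq]
    rw [hexp]
    exact Finset.sum_le_sum fun i _ => Finset.sum_le_sum fun j _ => hterm i j
  have hcs : (∑ i, |v i|) ^ 2 ≤ Fintype.card n * ∑ i, v i ^ 2 := by
    simpa using sq_sum_le_card_mul_sum_sq (s := Finset.univ) (f := fun i => |v i|)
  simp only [star_trivial, add_mulVec, dotProduct_add, smul_mulVec, one_mulVec, dotProduct_smul,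
    smul_eq_mul, hquad]
  rw [show v ⬝ᵥ v = ∑ i, v i ^ 2 by simp [dotProduct, sq]]
  nlinarith [mul_le_mul_of_nonneg_left hcs hc]

lemma isClosed_setOf_posSemidef : IsClosed {A : Matrix n n ℝ | A.PosSemidef} := by
  simp_rw [posSemidef_iff_dotProduct_mulVec, Set.ofPred_and, Set.ofPred_forall]
  exact (isClosed_eq continuous_id.matrix_conjTranspose continuous_id).inter
    (isClosed_iInter fun v => isClosed_le continuous_const
      (continuous_const.dotProduct (continuous_id.matrix_mulVec continuous_const)))

end Matrix

lemma matAbs_le_matSqrt_mul_mul {d : ℕ} {Z u A : Matrix (Fin d) (Fin d) ℝ} (hZ : Z.IsHermitian)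
    (hA : A.PosDef) (h : A⁻¹ * (Z * Z) * A⁻¹ ≤ u) : matAbs Z ≤ matSqrt (A * u * A) := by
  have hdet : IsUnit A.det := hA.isUnit.map detMonoidHom
  have hZZ : Z * Z ≤ A * u * A := by
    have := star_left_conjugate_le_conjugate h A
    rwa [star_eq_conjTranspose, hA.isHermitian.eq, mul_assoc,
      nonsing_inv_mul_cancel_right _ _ hdet, mul_nonsing_inv_cancel_left _ _ hdet] at this
  have hAuA : 0 ≤ A * u * A := (IsSelfAdjoint.mul_self_nonneg hZ).trans hZZ
  refine le_of_mul_self_le_mul_self (matAbs_nonneg hZ) (matSqrt_nonneg hAuA) ?_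
  rwa [matAbs_mul_self hZ, matSqrt_mul_self hAuA]

instance instBorelSpaceMatrix (d : ℕ) : BorelSpace (Matrix (Fin d) (Fin d) ℝ) :=
  inferInstanceAs (BorelSpace (Fin d → Fin d → ℝ))

lemma measurableSet_loewnerLE {d : ℕ} (Y : Matrix (Fin d) (Fin d) ℝ) :
    MeasurableSet {u | LoewnerLE Y u} :=
  (isClosed_setOf_posSemidef.preimage (continuous_id.sub continuous_const)).measurableSet

section Grid

variable {d : ℕ} {δ : ℝ}

def gridIndex (δ : ℝ) (x : Matrix (Fin d) (Fin d) ℝ) : Fin d → Fin d → ℤ :=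
  fun i j => ⌊x i j / δ⌋

def gridCenter (δ : ℝ) (z : Fin d → Fin d → ℤ) : Matrix (Fin d) (Fin d) ℝ :=
  (δ / 2) • (of (fun i j => (z i j : ℝ)) + (of fun i j => (z i j : ℝ))ᴴ)

def gridUpper (δ : ℝ) (z : Fin d → Fin d → ℤ) : Matrix (Fin d) (Fin d) ℝ :=
  gridCenter δ z + ((d : ℝ) * δ) • 1

lemma measurable_gridIndex : Measurable (gridIndex (d := d) δ) := by
  unfold gridIndex
  fun_prop

lemma isHermitian_gridCenter (z : Fin d → Fin d → ℤ) : (gridCenter δ z).IsHermitian :=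
  (isHermitian_add_transpose_self _).smul (.all _)

lemma mul_floor_div_mem_Ioc (hδ : 0 < δ) (a : ℝ) : δ * ⌊a / δ⌋ ∈ Set.Ioc (a - δ) a := by
  have h1 := Int.lt_floor_add_one (a / δ)
  have h2 := Int.floor_le (a / δ)
  rw [div_lt_iff₀ hδ] at h1
  rw [le_div_iff₀ hδ] at h2
  constructor <;> linarith

lemma abs_gridCenter_gridIndex_sub_le (hδ : 0 < δ) {x : Matrix (Fin d) (Fin d) ℝ}
    (hx : x.IsHermitian) (i j : Fin d) : |gridCenter δ (gridIndex δ x) i j - x i j| ≤ δ := by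
  have hs : x j i = x i j := by simpa using congr_fun (congr_fun hx i) j
  obtain ⟨hij, hij'⟩ := mul_floor_div_mem_Ioc hδ (x i j)
  obtain ⟨hji, hji'⟩ := mul_floor_div_mem_Ioc hδ (x j i)
  simp only [gridCenter, gridIndex, Matrix.smul_apply, Matrix.add_apply, conjTranspose_apply,
    of_apply, star_trivial, smul_eq_mul]
  rw [abs_le]
  constructor <;> linarith

lemma le_gridUpper_gridIndex (hδ : 0 < δ) {x : Matrix (Fin d) (Fin d) ℝ} (hx : x.IsHermitian) :
    x ≤ gridUpper δ (gridIndex δ x) := by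
  simpa [gridUpper] using le_add_smul_one_of_abs_sub_le hx (isHermitian_gridCenter _)
    (abs_gridCenter_gridIndex_sub_le hδ hx)

lemma trace_gridUpper_gridIndex_le (hδ : 0 < δ) (x : Matrix (Fin d) (Fin d) ℝ) :
    (gridUpper δ (gridIndex δ x)).trace ≤ x.trace + d * d * δ := by
  have hcenter : (gridCenter δ (gridIndex δ x)).trace ≤ x.trace := Finset.sum_le_sum fun i _ => by
    have := (mul_floor_div_mem_Ioc hδ (x i i)).2
    simp only [diag, gridCenter, gridIndex, Matrix.smul_apply, Matrix.add_apply,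
      conjTranspose_apply, of_apply, star_trivial, smul_eq_mul]
    linarith
  simp only [gridUpper, trace_add, trace_smul, trace_one, Fintype.card_fin, smul_eq_mul]
  linarith

end Grid

namespace TraceSuperUniform

variable {Ω : Type*} {m0 : MeasurableSpace Ω} {μ : Measure Ω} {d : ℕ}
  {U : Ω → Matrix (Fin d) (Fin d) ℝ}

lemma measure_not_loewnerLE_le_lintegral_trace_of_countable {ι : Type*} [Countable ι]
    [MeasurableSpace ι] [MeasurableSingletonClass ι] (hU : TraceSuperUniform μ U)
    {Z : Ω → ι} (hZ : Measurable Z) (hindep : IndepFun Z U μ) {g : ι → Matrix (Fin d) (Fin d) ℝ}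
    (hg : ∀ ω, (g (Z ω)).PosSemidef) :
    μ {ω | ¬ LoewnerLE (g (Z ω)) (U ω)} ≤ ∫⁻ ω, ENNReal.ofReal (g (Z ω)).trace ∂μ := by
  have hcover : {ω | ¬ LoewnerLE (g (Z ω)) (U ω)} =
      ⋃ z, Z ⁻¹' {z} ∩ U ⁻¹' {u | LoewnerLE (g z) u}ᶜ := by
    ext ω
    simp
  have hcell : ∀ z, μ (Z ⁻¹' {z}) * μ (U ⁻¹' {u | LoewnerLE (g z) u}ᶜ) ≤
      μ (Z ⁻¹' {z}) * ENNReal.ofReal (g z).trace := fun z => by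
    rcases (Z ⁻¹' {z}).eq_empty_or_nonempty with hempty | ⟨ω, rfl⟩
    · simp [hempty]
    · exact mul_le_mul_right (hU _ (hg ω)) _
  calc μ {ω | ¬ LoewnerLE (g (Z ω)) (U ω)}
      ≤ ∑' z, μ (Z ⁻¹' {z} ∩ U ⁻¹' {u | LoewnerLE (g z) u}ᶜ) := hcover ▸ measure_iUnion_le _
    _ = ∑' z, μ (Z ⁻¹' {z}) * μ (U ⁻¹' {u | LoewnerLE (g z) u}ᶜ) :=
        tsum_congr fun z => hindep.measure_inter_preimage_eq_mul _ _
          (measurableSet_singleton z) (measurableSet_loewnerLE _).compl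
    _ ≤ ∑' z, μ (Z ⁻¹' {z}) * ENNReal.ofReal (g z).trace := ENNReal.tsum_le_tsum hcell
    _ = ∫⁻ ω, ENNReal.ofReal (g (Z ω)).trace ∂μ := by
        rw [← lintegral_map (f := fun z => ENNReal.ofReal (g z).trace)
          (measurable_of_countable _) hZ, lintegral_countable']
        refine tsum_congr fun z => ?_
        rw [Measure.map_apply hZ (measurableSet_singleton z), mul_comm]

lemma measure_not_loewnerLE_le_lintegral_trace_of_measurable [IsProbabilityMeasure μ]
    (hU : TraceSuperUniform μ U) {W : Ω → Matrix (Fin d) (Fin d) ℝ} (hW : Measurable W)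
    (hWpsd : ∀ ω, (W ω).PosSemidef) (hindep : IndepFun W U μ) :
    μ {ω | ¬ LoewnerLE (W ω) (U ω)} ≤ ∫⁻ ω, ENNReal.ofReal (W ω).trace ∂μ := by
  refine ENNReal.le_of_forall_pos_le_add fun ε hε _ => ?_
  set δ : ℝ := ε / (d * d + 1)
  have hδ : 0 < δ := by positivity
  have herr : (d : ℝ) * d * δ ≤ ε := by
    rw [mul_div_assoc', div_le_iff₀ (by positivity)]
    nlinarith [ε.coe_nonneg]
  have hle : ∀ ω, W ω ≤ gridUpper δ (gridIndex δ (W ω)) := fun ω =>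
    le_gridUpper_gridIndex hδ (hWpsd ω).isHermitian
  calc μ {ω | ¬ LoewnerLE (W ω) (U ω)}
      ≤ μ {ω | ¬ LoewnerLE (gridUpper δ (gridIndex δ (W ω))) (U ω)} :=
        measure_mono fun ω hω hle' => hω ((hle ω).trans hle')
    _ ≤ ∫⁻ ω, ENNReal.ofReal (gridUpper δ (gridIndex δ (W ω))).trace ∂μ :=
        hU.measure_not_loewnerLE_le_lintegral_trace_of_countable (measurable_gridIndex.comp hW)
          (hindep.comp measurable_gridIndex measurable_id)
          fun ω => nonneg_iff_posSemidef.mp ((nonneg_iff_posSemidef.mpr (hWpsd ω)).trans (hle ω))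
    _ ≤ ∫⁻ ω, (ENNReal.ofReal (W ω).trace + ENNReal.ofReal ((d : ℝ) * d * δ)) ∂μ :=
        lintegral_mono fun ω => (ENNReal.ofReal_le_ofReal
          (trace_gridUpper_gridIndex_le hδ (W ω))).trans ENNReal.ofReal_add_le
    _ ≤ ∫⁻ ω, ENNReal.ofReal (W ω).trace ∂μ + ε := by
        rw [lintegral_add_right _ measurable_const, lintegral_const, measure_univ, mul_one]
        gcongr
        exact ENNReal.ofReal_coe_nnreal ▸ ENNReal.ofReal_le_ofReal herr

lemma measure_not_loewnerLE_le_lintegral_trace [IsProbabilityMeasure μ]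
    (hU : TraceSuperUniform μ U) {W : Ω → Matrix (Fin d) (Fin d) ℝ} (hW : AEMeasurable W μ)
    (hWpsd : ∀ᵐ ω ∂μ, (W ω).PosSemidef) (hindep : IndepFun W U μ) :
    μ {ω | ¬ LoewnerLE (W ω) (U ω)} ≤ ∫⁻ ω, ENNReal.ofReal (W ω).trace ∂μ := by
  obtain ⟨W', hW'm, hW'psd, hWW'⟩ :=
    hW.exists_ae_eq_range_subset (t := {x | x.PosSemidef}) hWpsd ⟨0, .zero⟩
  have hset : {ω | ¬ LoewnerLE (W ω) (U ω)} =ᵐ[μ] {ω | ¬ LoewnerLE (W' ω) (U ω)} := by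
    filter_upwards [hWW'] with ω hω
    change (¬ LoewnerLE (W ω) (U ω)) = ¬ LoewnerLE (W' ω) (U ω)
    rw [hω]
  rw [measure_congr hset, lintegral_congr_ae (hWW'.mono fun ω hω => by rw [hω])]
  exact hU.measure_not_loewnerLE_le_lintegral_trace_of_measurable hW'm
    (fun ω => hW'psd ⟨ω, rfl⟩) (hindep.congr hWW' .rfl)

end TraceSuperUniform

section Expectation

variable {Ω : Type*} {m0 : MeasurableSpace Ω} {μ : Measure Ω} {d : ℕ}
  {Y : Ω → Matrix (Fin d) (Fin d) ℝ}

lemma isHermitian_matExpect (hY : ∀ ω, (Y ω).IsHermitian) : (matExpect μ Y).IsHermitian := by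
  ext i j
  simp only [conjTranspose_apply, matExpect, of_apply, star_trivial]
  congr 1 with ω
  simpa using congr_fun (congr_fun (hY ω) i) j

lemma integrable_mul_self_apply (hY : ∀ i j, MemLp (fun ω => Y ω i j) 2 μ) (i j : Fin d) :
    Integrable (fun ω => (Y ω * Y ω) i j) μ := by
  simp only [mul_apply]
  exact integrable_finsetSum _ fun k _ => (hY i k).integrable_mul (hY k j)

lemma integrable_trace_mul (hY : ∀ i j, Integrable (fun ω => Y ω i j) μ)
    (K : Matrix (Fin d) (Fin d) ℝ) : Integrable (fun ω => (Y ω * K).trace) μ := by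
  simp only [trace, diag, mul_apply]
  exact integrable_finsetSum _ fun i _ => integrable_finsetSum _ fun k _ => (hY i k).mul_const _

lemma integral_trace_mul (hY : ∀ i j, Integrable (fun ω => Y ω i j) μ)
    (K : Matrix (Fin d) (Fin d) ℝ) : ∫ ω, (Y ω * K).trace ∂μ = (matExpect μ Y * K).trace := by
  simp only [trace, diag, mul_apply, matExpect, of_apply]
  rw [integral_finsetSum _ fun i _ => integrable_finsetSum _ fun k _ => (hY i k).mul_const _]
  refine Finset.sum_congr rfl fun i _ => ?_
  rw [integral_finsetSum _ fun k _ => (hY i k).mul_const _]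
  exact Finset.sum_congr rfl fun k _ => integral_mul_const _ _

end Expectation

theorem stmt1_general {Ω : Type*} {m0 : MeasurableSpace Ω} (μ : Measure Ω) [IsProbabilityMeasure μ]
    {d : ℕ} (X U : Ω → Matrix (Fin d) (Fin d) ℝ)
    (hXsymm : ∀ ω, (X ω).IsHermitian)
    (hXL2 : ∀ i j, MemLp (fun ω => X ω i j) 2 μ)
    (M : Matrix (Fin d) (Fin d) ℝ) (hM : matExpect μ X = M)
    (hU : TraceSuperUniform μ U)
    (hindep : IndepFun X U μ)
    (A : Matrix (Fin d) (Fin d) ℝ) (hA : A.PosDef) :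
    μ {ω | ¬ LoewnerLE (matAbs (X ω - M)) (matSqrt (A * U ω * A))} ≤
      ENNReal.ofReal
        ((matExpect μ (fun ω => (X ω - M) * (X ω - M)) * (A⁻¹ * A⁻¹)).trace) := by
  have hZ : ∀ ω, (X ω - M).IsHermitian := fun ω =>
    (hXsymm ω).sub (hM ▸ isHermitian_matExpect hXsymm)
  have hZ2 := integrable_mul_self_apply (Y := fun ω => X ω - M) fun i j =>
    (hXL2 i j).sub (memLp_const (M i j))
  set F : Matrix (Fin d) (Fin d) ℝ → Matrix (Fin d) (Fin d) ℝ :=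
    fun x => A⁻¹ * ((x - M) * (x - M)) * A⁻¹
  have hF : Measurable F := (by fun_prop : Continuous F).measurable
  have hX : AEMeasurable X μ := aemeasurable_pi_lambda _ fun i => aemeasurable_pi_lambda _ fun j =>
    (hXL2 i j).aestronglyMeasurable.aemeasurable
  have hFpsd : ∀ ω, (F (X ω)).PosSemidef := fun ω => nonneg_iff_posSemidef.mp <|
    IsSelfAdjoint.conjugate_nonneg (IsSelfAdjoint.mul_self_nonneg (hZ ω)) hA.isHermitian.inv
  have htrace : ∀ ω, (F (X ω)).trace = ((X ω - M) * (X ω - M) * (A⁻¹ * A⁻¹)).trace := fun ω => by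
    rw [trace_mul_cycle, trace_mul_comm]
  calc μ {ω | ¬ LoewnerLE (matAbs (X ω - M)) (matSqrt (A * U ω * A))}
      ≤ μ {ω | ¬ LoewnerLE (F (X ω)) (U ω)} :=
        measure_mono fun ω hω h => hω (matAbs_le_matSqrt_mul_mul (hZ ω) hA h)
    _ ≤ ∫⁻ ω, ENNReal.ofReal (F (X ω)).trace ∂μ :=
        hU.measure_not_loewnerLE_le_lintegral_trace (hF.comp_aemeasurable hX)
          (.of_forall hFpsd) (hindep.comp hF measurable_id)
    _ = ENNReal.ofReal (∫ ω, ((X ω - M) * (X ω - M) * (A⁻¹ * A⁻¹)).trace ∂μ) := by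
        simp_rw [htrace]
        refine (ofReal_integral_eq_lintegral_ofReal (integrable_trace_mul hZ2 _)
          (.of_forall fun ω => ?_)).symm
        simpa [htrace] using (hFpsd ω).trace_nonneg
    _ = _ := by rw [integral_trace_mul hZ2]

/-- **Uniformly randomized one-matrix Chebyshev inequality.**
For a random symmetric matrix `X` with square-integrable entries, mean `M` and variance
`Var(X) = E[(X - M)²]`, a trace super-uniform random PSD matrix `U` independent of `X`, and
`A ≻ 0`: `P( abs(X - M) ⋠ (A U A)^{1/2} ) ≤ tr( Var(X) · A⁻² )`. -/
theorem stmt1 {Ω : Type*} {m0 : MeasurableSpace Ω} (μ : Measure Ω) [IsProbabilityMeasure μ]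
    {d : ℕ} (X U : Ω → Matrix (Fin d) (Fin d) ℝ)
    (hXsymm : ∀ ω, (X ω).IsHermitian)
    (hXL2 : ∀ i j, MemLp (fun ω => X ω i j) 2 μ)
    (M : Matrix (Fin d) (Fin d) ℝ) (hM : matExpect μ X = M)
    (hUpsd : ∀ ω, (U ω).PosSemidef)
    (hU : TraceSuperUniform μ U)
    (hindep : IndepFun X U μ)
    (A : Matrix (Fin d) (Fin d) ℝ) (hA : A.PosDef) :
    μ {ω | ¬ LoewnerLE (matAbs (X ω - M)) (matSqrt (A * U ω * A))} ≤
      ENNReal.ofReal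
        ((matExpect μ (fun ω => (X ω - M) * (X ω - M)) * (A⁻¹ * A⁻¹)).trace) :=
  stmt1_general (m0 := m0) μ X U hXsymm hXL2 M hM hU hindep A hA

end
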